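/- arXiv:1102.2641 — 2 statements merged into one kernel-verified Lean document; each statement's English description precedes it below -/
import Mathlib

section
/- Let a > 1/2 with a ≠ 1, set α = 1/(1 + log₂ a), let p be a probability vector on n ≥ 2 symbols, and let j be any index. Set p̂_j = p_j^α·2^((α−1)·H_α(p)). Then o^{log₂ a}(p̂_j) ≤ L_a^opt(p) − H_α(p), and for every positive integer λ, L_a^opt(p) − H_α(p) < λ + (1/(log₂ a))·log₂( p̂_j^(1+log₂ a) + 2^(log₂ a)·(1−p̂_j)^(1+log₂ a)·(2^λ − 1)^(−log₂ a) ), where o^d(q) = inf over positive integers μ of ( μ + (1/d)·log₂( q^(1+d) + (1−q)^(1+d)·(2^μ − 1)^(−d) ) ). -/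
open Real Finset

/-- A valid codeword-length vector: all lengths at least 1 and the Kraft inequality holds. -/
def IsCode (n : ℕ) (l : Fin n → ℕ) : Prop :=
  (∀ i, 1 ≤ l i) ∧ ∑ i, (2 : ℝ) ^ (-(l i : ℝ)) ≤ 1

/-- Exponential average length `L_a(l,p)`. -/
noncomputable def expLength (n : ℕ) (a : ℝ) (l : Fin n → ℕ) (p : Fin n → ℝ) : ℝ :=
  Real.logb a (∑ i, p i * a ^ (l i : ℝ))

/-- Optimal exponential average length `L_a^opt(p)`. -/
noncomputable def expLengthOpt (n : ℕ) (a : ℝ) (p : Fin n → ℝ) : ℝ :=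
  sInf { r | ∃ l : Fin n → ℕ, IsCode n l ∧ r = expLength n a l p }

/-- Rényi entropy of order `α`. -/
noncomputable def renyiEntropy (n : ℕ) (α : ℝ) (p : Fin n → ℝ) : ℝ :=
  (1 / (1 - α)) * Real.logb 2 (∑ i, (p i) ^ α)

/-- The lower-bound function `o^d(q)`. -/
noncomputable def lowerBound (d q : ℝ) : ℝ :=
  sInf { r | ∃ μ : ℕ, 1 ≤ μ ∧
    r = (μ : ℝ) + (1 / d) * Real.logb 2
      (q ^ (1 + d) + (1 - q) ^ (1 + d) * ((2 : ℝ) ^ (μ : ℝ) - 1) ^ (-d)) }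

/-!
Write `d = log₂ a`, so that `α = 1 / (1 + d)`, and let `r` be the escort distribution
`r i = p i ^ α / ∑ k, p k ^ α`. Then `p̂_j = r j`, and for every code `l` the redundancy
`L_a(l, p) - H_α(p)` equals `(1 / d) log₂ ∑ r_i ^ (1 + d) 2 ^ (d l_i)`.

Whatever the sign of `d`, `0 ≤ d (y - x)` gives `(1 / d) log₂ x ≤ (1 / d) log₂ y`, and Jensen's
inequality for `x ^ (1 + d)` (convex for `d > 0`, concave for `-1 < d < 0`) produces bounds of
exactly this signed form. For the lower bound, the symbols `i ≠ j` share the Kraft budget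
`1 - 2 ^ (-l_j)`, and Jensen bounds their contribution by
`(1 - r j) ^ (1 + d) (1 - 2 ^ (-l_j)) ^ (-d)`.
For the upper bound, fix `l_j = λ` and give every other symbol the Shannon length of `r`
rescaled to the budget `1 - 2 ^ (-λ)`; rounding up costs less than one bit per symbol, which is
where the factor `2 ^ d` comes from.
-/

section SignedComparison

variable {d x y : ℝ}

lemma one_div_mul_logb_le_of_mul_sub_nonneg (hd : d ≠ 0) (hx : 0 < x) (hy : 0 < y)
    (h : 0 ≤ d * (y - x)) : 1 / d * logb 2 x ≤ 1 / d * logb 2 y := by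
  rcases hd.lt_or_gt with hd | hd
  · have hyx : y ≤ x := by nlinarith
    exact mul_le_mul_of_nonpos_left (logb_le_logb_of_le one_lt_two hy hyx)
      (one_div_neg.mpr hd).le
  · have hxy : x ≤ y := by nlinarith
    exact mul_le_mul_of_nonneg_left (logb_le_logb_of_le one_lt_two hx hxy)
      (one_div_pos.mpr hd).le

lemma one_div_mul_logb_lt_of_mul_sub_pos (hx : 0 < x) (hy : 0 < y)
    (h : 0 < d * (y - x)) : 1 / d * logb 2 x < 1 / d * logb 2 y := by
  rcases lt_trichotomy d 0 with hd | rfl | hd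
  · have hyx : y < x := by nlinarith
    exact mul_lt_mul_of_neg_left ((logb_lt_logb_iff one_lt_two hy hx).mpr hyx)
      (one_div_neg.mpr hd)
  · simp at h
  · have hxy : x < y := by nlinarith
    exact mul_lt_mul_of_pos_left ((logb_lt_logb_iff one_lt_two hx hy).mpr hxy)
      (one_div_pos.mpr hd)

lemma mul_sub_two_rpow_mul_nonneg (h : x ≤ y) : 0 ≤ d * ((2 : ℝ) ^ (d * y) - 2 ^ (d * x)) := by
  rcases le_total d 0 with hd | hd
  · refine mul_nonneg_of_nonpos_of_nonpos hd (sub_nonpos.mpr ?_)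
    exact rpow_le_rpow_of_exponent_le one_le_two (mul_le_mul_of_nonpos_left h hd)
  · refine mul_nonneg hd (sub_nonneg.mpr ?_)
    exact rpow_le_rpow_of_exponent_le one_le_two (mul_le_mul_of_nonneg_left h hd)

lemma mul_sub_two_rpow_mul_pos (hd : d ≠ 0) (h : x < y) :
    0 < d * ((2 : ℝ) ^ (d * y) - 2 ^ (d * x)) := by
  rcases hd.lt_or_gt with hd | hd
  · refine mul_pos_of_neg_of_neg hd (sub_neg.mpr ?_)
    exact rpow_lt_rpow_of_exponent_lt one_lt_two (mul_lt_mul_of_neg_left h hd)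
  · refine mul_pos hd (sub_pos.mpr ?_)
    exact rpow_lt_rpow_of_exponent_lt one_lt_two (mul_lt_mul_of_pos_left h hd)

lemma mul_sub_rpow_neg_nonneg (hx : 0 < x) (h : x ≤ y) : 0 ≤ d * (x ^ (-d) - y ^ (-d)) := by
  rcases le_total d 0 with hd | hd
  · exact mul_nonneg_of_nonpos_of_nonpos hd
      (sub_nonpos.mpr (rpow_le_rpow hx.le h (by linarith)))
  · exact mul_nonneg hd (sub_nonneg.mpr (rpow_le_rpow_of_nonpos hx h (by linarith)))

lemma mul_rpow_div_eq (hu : 0 ≤ x) (ht : 0 < y) :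
    y * (x / y) ^ (1 + d) = x ^ (1 + d) * y ^ (-d) := by
  rw [div_rpow hu ht.le, rpow_add ht, rpow_one, rpow_neg ht.le]
  field_simp

lemma mul_sub_sum_rpow_mul_rpow_neg_nonneg {ι : Type*} {s : Finset ι} {u t : ι → ℝ}
    (hd : -1 < d) (hs : s.Nonempty) (hu : ∀ i ∈ s, 0 ≤ u i) (ht : ∀ i ∈ s, 0 < t i) :
    0 ≤ d * (∑ i ∈ s, u i ^ (1 + d) * t i ^ (-d) -
      (∑ i ∈ s, u i) ^ (1 + d) * (∑ i ∈ s, t i) ^ (-d)) := by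
  set T := ∑ i ∈ s, t i
  have hT : 0 < T := sum_pos ht hs
  have hw : ∀ i ∈ s, 0 ≤ t i / T := fun i hi => (div_pos (ht i hi) hT).le
  have hw1 : ∑ i ∈ s, t i / T = 1 := by rw [← sum_div, div_self hT.ne']
  have hz : ∀ i ∈ s, u i / t i ∈ Set.Ici (0 : ℝ) := fun i hi => div_nonneg (hu i hi) (ht i hi).le
  have hmean : ∑ i ∈ s, (t i / T) • (u i / t i) = (∑ i ∈ s, u i) / T := by
    rw [sum_div]
    refine sum_congr rfl fun i hi => ?_
    rw [smul_eq_mul, div_mul_div_comm, mul_comm (t i), mul_div_mul_right _ _ (ht i hi).ne']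
  have hmeanPow : ∑ i ∈ s, (t i / T) • (u i / t i) ^ (1 + d) =
      (∑ i ∈ s, u i ^ (1 + d) * t i ^ (-d)) / T := by
    rw [sum_div]
    refine sum_congr rfl fun i hi => ?_
    rw [smul_eq_mul, div_mul_eq_mul_div, mul_rpow_div_eq (hu i hi) (ht i hi)]
  have hjensen : 0 ≤ d * ((∑ i ∈ s, u i ^ (1 + d) * t i ^ (-d)) / T -
      ((∑ i ∈ s, u i) / T) ^ (1 + d)) := by
    rw [← hmean, ← hmeanPow]
    rcases le_total d 0 with hd0 | hd0
    · exact mul_nonneg_of_nonpos_of_nonpos hd0 (sub_nonpos.mpr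
        ((concaveOn_rpow (p := 1 + d) (by linarith) (by linarith)).le_map_sum hw hw1 hz))
    · exact mul_nonneg hd0 (sub_nonneg.mpr
        ((convexOn_rpow (p := 1 + d) (by linarith)).map_sum_le hw hw1 hz))
  have hscale : T * ((∑ i ∈ s, u i) / T) ^ (1 + d) = (∑ i ∈ s, u i) ^ (1 + d) * T ^ (-d) :=
    mul_rpow_div_eq (sum_nonneg hu) hT
  calc 0 ≤ T * (d * ((∑ i ∈ s, u i ^ (1 + d) * t i ^ (-d)) / T -
        ((∑ i ∈ s, u i) / T) ^ (1 + d))) := mul_nonneg hT.le hjensen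
    _ = _ := by rw [mul_left_comm, mul_sub, mul_div_cancel₀ _ hT.ne', hscale]

lemma mul_sub_sum_rpow_mul_rpow_neg_nonneg_of_sum_le {ι : Type*} {s : Finset ι} {u t : ι → ℝ}
    (hd : -1 < d) (hu : ∀ i ∈ s, 0 ≤ u i) (ht : ∀ i ∈ s, 0 < t i) (hc : ∑ i ∈ s, t i ≤ x) :
    0 ≤ d * (∑ i ∈ s, u i ^ (1 + d) * t i ^ (-d) - (∑ i ∈ s, u i) ^ (1 + d) * x ^ (-d)) := by
  rcases s.eq_empty_or_nonempty with rfl | hs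
  · simp [zero_rpow (by linarith : (1 : ℝ) + d ≠ 0)]
  have hjensen := mul_sub_sum_rpow_mul_rpow_neg_nonneg hd hs hu ht
  have hmono := mul_sub_rpow_neg_nonneg (d := d) (sum_pos ht hs) hc
  have hU := mul_nonneg (rpow_nonneg (sum_nonneg hu) (1 + d)) hmono
  linarith

lemma mul_sub_sum_two_rpow_mul_pos {ι : Type*} {s : Finset ι} {w x y : ι → ℝ} (hd : d ≠ 0)
    (hs : s.Nonempty) (hw : ∀ i ∈ s, 0 < w i) (hxy : ∀ i ∈ s, x i < y i) :
    0 < d * (∑ i ∈ s, w i * 2 ^ (d * y i) - ∑ i ∈ s, w i * 2 ^ (d * x i)) := by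
  rw [← sum_sub_distrib, mul_sum]
  refine sum_pos (fun i hi => ?_) hs
  rw [← mul_sub, mul_left_comm]
  exact mul_pos (hw i hi) (mul_sub_two_rpow_mul_pos hd (hxy i hi))

end SignedComparison

lemma one_sub_two_rpow_neg_pos {μ : ℝ} (hμ : 0 < μ) : (0 : ℝ) < 1 - 2 ^ (-μ) :=
  sub_pos.mpr (rpow_lt_one_of_one_lt_of_neg one_lt_two (neg_lt_zero.mpr hμ))

lemma two_rpow_neg_natCeil_logb_le {x : ℝ} (hx : 0 < x) : (2 : ℝ) ^ (-(⌈logb 2 x⌉₊ : ℝ)) ≤ x⁻¹ :=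
  calc (2 : ℝ) ^ (-(⌈logb 2 x⌉₊ : ℝ)) ≤ 2 ^ (-logb 2 x) :=
        rpow_le_rpow_of_exponent_le one_le_two (neg_le_neg (Nat.le_ceil _))
    _ = x⁻¹ := by rw [rpow_neg zero_le_two, rpow_logb two_pos (by norm_num) hx]

lemma add_one_div_mul_logb_eq {d q K μ : ℝ} (hd : d ≠ 0) (hq0 : 0 < q) (hq1 : q ≤ 1) (hK : 0 < K)
    (hμ : 0 < μ) :
    μ + 1 / d * logb 2 (q ^ (1 + d) + K * (1 - q) ^ (1 + d) * ((2 : ℝ) ^ μ - 1) ^ (-d)) =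
      1 / d * logb 2
        (q ^ (1 + d) * 2 ^ (d * μ) + K * (1 - q) ^ (1 + d) * (1 - 2 ^ (-μ)) ^ (-d)) := by
  have hX : 0 < (2 : ℝ) ^ μ - 1 := sub_pos.mpr (one_lt_rpow one_lt_two hμ)
  have hsplit : (1 : ℝ) - 2 ^ (-μ) = ((2 : ℝ) ^ μ - 1) * 2 ^ (-μ) := by
    rw [sub_mul, ← rpow_add two_pos, add_neg_cancel, rpow_zero, one_mul]
  have hinner : 0 < q ^ (1 + d) + K * (1 - q) ^ (1 + d) * ((2 : ℝ) ^ μ - 1) ^ (-d) := by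
    have hA := rpow_pos_of_pos hq0 (1 + d)
    have hB := rpow_nonneg (sub_nonneg.mpr hq1) (1 + d)
    have hC := rpow_pos_of_pos hX (-d)
    positivity
  have hfactor : q ^ (1 + d) * 2 ^ (d * μ) + K * (1 - q) ^ (1 + d) * (1 - 2 ^ (-μ)) ^ (-d) =
      2 ^ (d * μ) * (q ^ (1 + d) + K * (1 - q) ^ (1 + d) * ((2 : ℝ) ^ μ - 1) ^ (-d)) := by
    rw [hsplit, mul_rpow hX.le (rpow_nonneg zero_le_two _), ← rpow_mul zero_le_two,
      neg_mul_neg, mul_comm μ d]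
    ring
  rw [hfactor, logb_mul (rpow_pos_of_pos two_pos _).ne' hinner.ne',
    logb_rpow two_pos (by norm_num)]
  field_simp

noncomputable def escort {ι : Type*} [Fintype ι] (α : ℝ) (p : ι → ℝ) (i : ι) : ℝ :=
  p i ^ α / ∑ k, p k ^ α

section Escort

variable {ι : Type*} [Fintype ι] {α : ℝ} {p : ι → ℝ}

lemma escort_pos (hp : ∀ i, 0 < p i) (i : ι) : 0 < escort α p i :=
  div_pos (rpow_pos_of_pos (hp i) α) (sum_pos (fun k _ => rpow_pos_of_pos (hp k) α) ⟨i, mem_univ i⟩)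

lemma sum_escort [Nonempty ι] (hp : ∀ i, 0 < p i) : ∑ i, escort α p i = 1 := by
  have hS : 0 < ∑ k, p k ^ α := sum_pos (fun k _ => rpow_pos_of_pos (hp k) α) univ_nonempty
  simp only [escort, ← sum_div, div_self hS.ne']

lemma escort_rpow {d : ℝ} (hα : α * (1 + d) = 1) (hp : ∀ i, 0 < p i) (i : ι) :
    escort α p i ^ (1 + d) = p i / (∑ k, p k ^ α) ^ (1 + d) := by
  have hS : 0 < ∑ k, p k ^ α := sum_pos (fun k _ => rpow_pos_of_pos (hp k) α) ⟨i, mem_univ i⟩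
  rw [escort, div_rpow (rpow_nonneg (hp i).le _) hS.le, ← rpow_mul (hp i).le, hα, rpow_one]

end Escort

section Redundancy

variable {n : ℕ} {a d α : ℝ} {p : Fin n → ℝ}

lemma expLength_eq (ha : 0 < a) (l : Fin n → ℕ) :
    expLength n a l p = 1 / logb 2 a * logb 2 (∑ i, p i * 2 ^ (logb 2 a * l i)) := by
  have hpow : ∀ x : ℝ, a ^ x = 2 ^ (logb 2 a * x) := fun x => by
    rw [rpow_mul zero_le_two, rpow_logb two_pos (by norm_num) ha]
  have hlog2 : log 2 ≠ 0 := (log_pos one_lt_two).ne'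
  simp only [expLength, hpow]
  rw [logb, logb, logb, one_div_div, div_mul_div_comm, mul_comm (log 2),
    mul_div_mul_right _ _ hlog2]

lemma renyiEntropy_eq (hα : α * (1 + d) = 1) :
    renyiEntropy n α p = (1 + d) / d * logb 2 (∑ i, p i ^ α) := by
  have h1α : 1 - α = α * d := by linarith
  rw [renyiEntropy, h1α, one_div, mul_inv, inv_eq_of_mul_eq_one_right hα, div_eq_mul_inv]

lemma expLength_sub_renyiEntropy [NeZero n] (ha : 0 < a) (hα : α * (1 + logb 2 a) = 1)
    (hp : ∀ i, 0 < p i) (l : Fin n → ℕ) :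
    expLength n a l p - renyiEntropy n α p =
      1 / logb 2 a * logb 2 (∑ i, escort α p i ^ (1 + logb 2 a) * 2 ^ (logb 2 a * l i)) := by
  have hS : 0 < ∑ k, p k ^ α := sum_pos (fun k _ => rpow_pos_of_pos (hp k) α) univ_nonempty
  have hG : 0 < ∑ i, p i * (2 : ℝ) ^ (logb 2 a * l i) :=
    sum_pos (fun i _ => mul_pos (hp i) (rpow_pos_of_pos two_pos _)) univ_nonempty
  simp only [expLength_eq ha, renyiEntropy_eq hα, escort_rpow hα hp, div_mul_eq_mul_div,
    ← sum_div]
  rw [logb_div hG.ne' (rpow_pos_of_pos hS _).ne', logb_rpow_eq_mul_logb_of_pos hS]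
  ring

lemma rpow_mul_two_rpow_renyiEntropy_eq_escort (hd : d ≠ 0) (hα : α * (1 + d) = 1) (hp : ∀ i, 0 < p i)
    (j : Fin n) : p j ^ α * 2 ^ ((α - 1) * renyiEntropy n α p) = escort α p j := by
  have hS : 0 < ∑ k, p k ^ α := sum_pos (fun k _ => rpow_pos_of_pos (hp k) α) ⟨j, mem_univ j⟩
  have hcoef : (α - 1) * ((1 + d) / d) = -1 := by
    field_simp
    linarith
  rw [renyiEntropy_eq hα, ← mul_assoc, hcoef, neg_one_mul, rpow_neg zero_le_two,
    rpow_logb two_pos (by norm_num) hS, escort, div_eq_mul_inv]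

end Redundancy

lemma lowerBound_le_of_one_le {d q : ℝ} (hd : d ≠ 0) (hq0 : 0 < q) (hq1 : q ≤ 1) {μ : ℕ}
    (hμ : 1 ≤ μ) :
    lowerBound d q ≤
      μ + 1 / d * logb 2 (q ^ (1 + d) + (1 - q) ^ (1 + d) * ((2 : ℝ) ^ (μ : ℝ) - 1) ^ (-d)) := by
  have hA := rpow_pos_of_pos hq0 (1 + d)
  have hB := rpow_nonneg (sub_nonneg.mpr hq1) (1 + d)
  refine csInf_le ⟨1 / d * logb 2 (q ^ (1 + d) + (1 - q) ^ (1 + d)), ?_⟩ ⟨μ, hμ, rfl⟩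
  rintro _ ⟨ν, hν, rfl⟩
  have hν0 : (0 : ℝ) < ν := by exact_mod_cast hν
  have hid := add_one_div_mul_logb_eq hd hq0 hq1 one_pos hν0
  simp only [one_mul] at hid
  rw [hid]
  have hc0 : (0 : ℝ) < 1 - 2 ^ (-(ν : ℝ)) := one_sub_two_rpow_neg_pos hν0
  have hc1 : (1 : ℝ) - 2 ^ (-(ν : ℝ)) ≤ 1 := sub_le_self _ (rpow_nonneg zero_le_two _)
  have hexp := mul_sub_two_rpow_mul_nonneg (d := d) hν0.le
  have hpow := mul_sub_rpow_neg_nonneg (d := d) hc0 hc1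
  rw [mul_zero, rpow_zero] at hexp
  rw [one_rpow] at hpow
  refine one_div_mul_logb_le_of_mul_sub_nonneg hd (by positivity) (by positivity) ?_
  have := add_nonneg (mul_nonneg hA.le hexp) (mul_nonneg hB hpow)
  linarith

section Codes

variable {n : ℕ} {d : ℝ} {r : Fin n → ℝ}

lemma sum_erase_eq_one_sub (hr1 : ∑ i, r i = 1) (j : Fin n) :
    ∑ i ∈ univ.erase j, r i = 1 - r j := by
  rw [← hr1, ← add_sum_erase univ r (mem_univ j), add_sub_cancel_left]

lemma le_one_of_sum_eq_one (hr : ∀ i, 0 < r i) (hr1 : ∑ i, r i = 1) (j : Fin n) : r j ≤ 1 :=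
  hr1 ▸ single_le_sum (fun i _ => (hr i).le) (mem_univ j)

lemma add_one_div_mul_logb_le_of_isCode (hd1 : -1 < d) (hd : d ≠ 0) (hr : ∀ i, 0 < r i)
    (hr1 : ∑ i, r i = 1) {l : Fin n → ℕ} (hl : IsCode n l) (j : Fin n) :
    (l j : ℝ) + 1 / d * logb 2
        (r j ^ (1 + d) + (1 - r j) ^ (1 + d) * ((2 : ℝ) ^ (l j : ℝ) - 1) ^ (-d)) ≤
      1 / d * logb 2 (∑ i, r i ^ (1 + d) * 2 ^ (d * l i)) := by
  obtain ⟨hl1, hkraft⟩ := hl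
  have hμ : (0 : ℝ) < l j := by exact_mod_cast hl1 j
  have hrj1 := le_one_of_sum_eq_one hr hr1 j
  have hid := add_one_div_mul_logb_eq hd (hr j) hrj1 one_pos hμ
  simp only [one_mul] at hid
  rw [hid]
  have hterm : ∀ i, r i ^ (1 + d) * (2 : ℝ) ^ (d * l i) =
      r i ^ (1 + d) * ((2 : ℝ) ^ (-(l i : ℝ))) ^ (-d) := fun i => by
    rw [← rpow_mul zero_le_two, neg_mul_neg, mul_comm (l i : ℝ)]
  have hkraftRest : ∑ i ∈ univ.erase j, (2 : ℝ) ^ (-(l i : ℝ)) ≤ 1 - 2 ^ (-(l j : ℝ)) := by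
    rw [← add_sum_erase univ _ (mem_univ j)] at hkraft
    linarith
  have hrest := mul_sub_sum_rpow_mul_rpow_neg_nonneg_of_sum_le hd1
    (fun i _ => (hr i).le) (fun i _ => rpow_pos_of_pos two_pos _) hkraftRest
  rw [sum_erase_eq_one_sub hr1, ← sum_congr rfl fun i _ => hterm i] at hrest
  have hrj := hr j
  have hrest0 := rpow_nonneg (sub_nonneg.mpr hrj1) (1 + d)
  have hc0 : (0 : ℝ) < 1 - 2 ^ (-(l j : ℝ)) := one_sub_two_rpow_neg_pos hμ
  refine one_div_mul_logb_le_of_mul_sub_nonneg hd (by positivity)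
    (sum_pos (fun i _ => mul_pos (rpow_pos_of_pos (hr i) _) (by positivity)) ⟨j, mem_univ j⟩) ?_
  rw [← add_sum_erase univ _ (mem_univ j)]
  linarith

noncomputable def splitCode (r : Fin n → ℝ) (j : Fin n) (lam : ℕ) (i : Fin n) : ℕ :=
  if i = j then lam else ⌈logb 2 ((1 - r j) / ((1 - 2 ^ (-(lam : ℝ))) * r i))⌉₊

lemma splitCode_self (r : Fin n → ℝ) (j : Fin n) (lam : ℕ) : splitCode r j lam j = lam :=
  if_pos rfl

lemma le_one_sub_of_ne (hr : ∀ i, 0 < r i) (hr1 : ∑ i, r i = 1) {i j : Fin n} (hij : i ≠ j) :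
    r i ≤ 1 - r j := by
  rw [← sum_erase_eq_one_sub hr1]
  exact single_le_sum (fun k _ => (hr k).le) (mem_erase.mpr ⟨hij, mem_univ i⟩)

lemma one_lt_splitCode_ratio (hr : ∀ i, 0 < r i) (hr1 : ∑ i, r i = 1) {lam : ℕ} (hlam : 1 ≤ lam)
    {i j : Fin n} (hij : i ≠ j) : 1 < (1 - r j) / ((1 - 2 ^ (-(lam : ℝ))) * r i) := by
  have hlam0 : (0 : ℝ) < lam := by exact_mod_cast hlam
  have hc0 := one_sub_two_rpow_neg_pos hlam0
  have hc1 : (1 : ℝ) - 2 ^ (-(lam : ℝ)) < 1 := sub_lt_self _ (rpow_pos_of_pos two_pos _)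
  rw [one_lt_div (mul_pos hc0 (hr i))]
  nlinarith [le_one_sub_of_ne hr hr1 hij, hr i]

lemma isCode_splitCode (hr : ∀ i, 0 < r i) (hr1 : ∑ i, r i = 1) (j : Fin n) {lam : ℕ}
    (hlam : 1 ≤ lam) : IsCode n (splitCode r j lam) := by
  have hlam0 : (0 : ℝ) < lam := by exact_mod_cast hlam
  set c : ℝ := 1 - 2 ^ (-(lam : ℝ))
  have hc0 : 0 < c := one_sub_two_rpow_neg_pos hlam0
  refine ⟨fun i => ?_, ?_⟩
  · by_cases hij : i = j
    · simp [splitCode, hij, hlam]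
    · rw [splitCode, if_neg hij, Nat.one_le_ceil_iff]
      exact logb_pos one_lt_two (one_lt_splitCode_ratio hr hr1 hlam hij)
  have hrest : ∑ i ∈ univ.erase j, (2 : ℝ) ^ (-(splitCode r j lam i : ℝ)) ≤ c :=
    calc ∑ i ∈ univ.erase j, (2 : ℝ) ^ (-(splitCode r j lam i : ℝ))
        ≤ ∑ i ∈ univ.erase j, c * r i / (1 - r j) := by
          refine sum_le_sum fun i hi => ?_
          have hij := (mem_erase.mp hi).1
          rw [splitCode, if_neg hij]
          exact (two_rpow_neg_natCeil_logb_le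
            (zero_lt_one.trans (one_lt_splitCode_ratio hr hr1 hlam hij))).trans_eq (inv_div _ _)
      _ = c * ((1 - r j) / (1 - r j)) := by
          rw [← sum_div, ← mul_sum, sum_erase_eq_one_sub hr1, mul_div_assoc]
      _ ≤ c := mul_le_of_le_one_right hc0.le (div_self_le_one _)
  rw [← add_sum_erase univ _ (mem_univ j), splitCode_self]
  linarith

lemma one_div_mul_logb_splitCode_lt (hn : 2 ≤ n) (hd : d ≠ 0) (hr : ∀ i, 0 < r i)
    (hr1 : ∑ i, r i = 1) (j : Fin n) {lam : ℕ} (hlam : 1 ≤ lam) :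
    1 / d * logb 2 (∑ i, r i ^ (1 + d) * 2 ^ (d * splitCode r j lam i)) < lam +
      1 / d * logb 2 (r j ^ (1 + d) +
        2 ^ d * (1 - r j) ^ (1 + d) * ((2 : ℝ) ^ (lam : ℝ) - 1) ^ (-d)) := by
  have hlam0 : (0 : ℝ) < lam := by exact_mod_cast hlam
  have hrest : (univ.erase j).Nonempty := by
    rw [← card_pos, card_erase_of_mem (mem_univ j), card_univ, Fintype.card_fin]
    omega
  have hA : 0 < 1 - r j := by
    obtain ⟨i, hi⟩ := hrest
    exact (hr i).trans_le (le_one_sub_of_ne hr hr1 (mem_erase.mp hi).1)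
  rw [add_one_div_mul_logb_eq hd (hr j) (by linarith) (rpow_pos_of_pos two_pos d) hlam0]
  set A := 1 - r j
  set c : ℝ := 1 - 2 ^ (-(lam : ℝ))
  have hc0 : 0 < c := one_sub_two_rpow_neg_pos hlam0
  have hterm : ∀ i, r i ^ (1 + d) * 2 ^ (d * (logb 2 (A / (c * r i)) + 1)) =
      2 ^ d * (A / c) ^ d * r i := fun i => by
    have hri := hr i
    rw [mul_add, mul_one, rpow_add two_pos, mul_comm d, rpow_mul zero_le_two,
      rpow_logb two_pos (by norm_num) (by positivity), ← div_div, div_rpow (by positivity) hri.le,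
      rpow_add hri, rpow_one]
    field_simp
  have hsum : ∑ i ∈ univ.erase j, r i ^ (1 + d) * 2 ^ (d * (logb 2 (A / (c * r i)) + 1)) =
      2 ^ d * A ^ (1 + d) * c ^ (-d) := by
    rw [sum_congr rfl fun i _ => hterm i, ← mul_sum, sum_erase_eq_one_sub hr1,
      div_rpow hA.le hc0.le, rpow_add hA, rpow_one, rpow_neg hc0.le]
    ring
  have hlt : ∀ i ∈ univ.erase j, (splitCode r j lam i : ℝ) < logb 2 (A / (c * r i)) + 1 := by
    intro i hi
    have hij := (mem_erase.mp hi).1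
    rw [splitCode, if_neg hij]
    exact Nat.ceil_lt_add_one (logb_pos one_lt_two (one_lt_splitCode_ratio hr hr1 hlam hij)).le
  have hstrict := mul_sub_sum_two_rpow_mul_pos hd hrest
    (fun i _ => rpow_pos_of_pos (hr i) (1 + d)) hlt
  rw [hsum] at hstrict
  have hrj := hr j
  refine one_div_mul_logb_lt_of_mul_sub_pos
    (sum_pos (fun i _ => mul_pos (rpow_pos_of_pos (hr i) _) (by positivity)) ⟨j, mem_univ j⟩)
    (by positivity) ?_
  rw [← add_sum_erase univ _ (mem_univ j), splitCode_self]
  linarith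

end Codes

section Optimal

variable {n : ℕ} {a b : ℝ} {p : Fin n → ℝ}

lemma le_expLengthOpt (hne : ∃ l, IsCode n l) (h : ∀ l, IsCode n l → b ≤ expLength n a l p) :
    b ≤ expLengthOpt n a p := by
  obtain ⟨l, hl⟩ := hne
  exact le_csInf ⟨_, l, hl, rfl⟩ (by rintro _ ⟨l, hl, rfl⟩; exact h l hl)

lemma expLengthOpt_le (h : ∀ l, IsCode n l → b ≤ expLength n a l p) {l : Fin n → ℕ}
    (hl : IsCode n l) : expLengthOpt n a p ≤ expLength n a l p :=
  csInf_le ⟨b, by rintro _ ⟨l, hl, rfl⟩; exact h l hl⟩ ⟨l, hl, rfl⟩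

end Optimal

theorem stmt_18_general (n : ℕ) (hn : 2 ≤ n) (a : ℝ) (ha : 1 / 2 < a) (ha1 : a ≠ 1)
    (p : Fin n → ℝ) (hp : ∀ i, 0 < p i) (j : Fin n) :
    let α := 1 / (1 + Real.logb 2 a)
    let phatj := (p j) ^ α * (2 : ℝ) ^ ((α - 1) * renyiEntropy n α p)
    lowerBound (Real.logb 2 a) phatj ≤ expLengthOpt n a p - renyiEntropy n α p ∧
    ∀ lam : ℕ, 1 ≤ lam →
      expLengthOpt n a p - renyiEntropy n α p < (lam : ℝ) +
        (1 / Real.logb 2 a) * Real.logb 2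
          (phatj ^ (1 + Real.logb 2 a) +
            (2 : ℝ) ^ (Real.logb 2 a) * (1 - phatj) ^ (1 + Real.logb 2 a) *
              ((2 : ℝ) ^ (lam : ℝ) - 1) ^ (-(Real.logb 2 a))) := by
  intro α phatj
  have ha0 : 0 < a := by linarith
  have hd : logb 2 a ≠ 0 := logb_ne_zero_of_pos_of_ne_one one_lt_two ha0 ha1
  have hd1 : -1 < logb 2 a := by
    have := logb_lt_logb one_lt_two (by norm_num) ha
    rwa [one_div, logb_inv, logb_self_eq_one one_lt_two] at this
  have hα : α * (1 + logb 2 a) = 1 := one_div_mul_cancel (by linarith)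
  have : NeZero n := ⟨by omega⟩
  set r := escort α p
  have hr : ∀ i, 0 < r i := escort_pos hp
  have hr1 : ∑ i, r i = 1 := sum_escort hp
  have hq : phatj = r j := rpow_mul_two_rpow_renyiEntropy_eq_escort hd hα hp j
  have hlow : ∀ l, IsCode n l → lowerBound (logb 2 a) phatj + renyiEntropy n α p ≤
      expLength n a l p := fun l hl => by
    have h1 := lowerBound_le_of_one_le hd (hr j) (le_one_of_sum_eq_one hr hr1 j) (hl.1 j)
    have h2 := add_one_div_mul_logb_le_of_isCode hd1 hd hr hr1 hl j
    rw [hq]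
    linarith [expLength_sub_renyiEntropy ha0 hα hp l]
  refine ⟨?_, fun lam hlam => ?_⟩
  · linarith [le_expLengthOpt ⟨_, isCode_splitCode hr hr1 j le_rfl⟩ hlow]
  · have h1 := expLengthOpt_le hlow (isCode_splitCode hr hr1 j hlam)
    have h2 := one_div_mul_logb_splitCode_lt hn hd hr hr1 j hlam
    rw [hq]
    linarith [expLength_sub_renyiEntropy ha0 hα hp (splitCode r j lam)]

theorem stmt_18 (n : ℕ) (hn : 2 ≤ n) (a : ℝ) (ha : 1 / 2 < a) (ha1 : a ≠ 1)
    (p : Fin n → ℝ) (hp : ∀ i, 0 < p i) (hpsum : ∑ i, p i = 1) (j : Fin n) :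
    let α := 1 / (1 + Real.logb 2 a)
    let phatj := (p j) ^ α * (2 : ℝ) ^ ((α - 1) * renyiEntropy n α p)
    lowerBound (Real.logb 2 a) phatj ≤ expLengthOpt n a p - renyiEntropy n α p ∧
    ∀ lam : ℕ, 1 ≤ lam →
      expLengthOpt n a p - renyiEntropy n α p < (lam : ℝ) +
        (1 / Real.logb 2 a) * Real.logb 2
          (phatj ^ (1 + Real.logb 2 a) +
            (2 : ℝ) ^ (Real.logb 2 a) * (1 - phatj) ^ (1 + Real.logb 2 a) *
              ((2 : ℝ) ^ (lam : ℝ) - 1) ^ (-(Real.logb 2 a))) :=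
  stmt_18_general n hn a ha ha1 p hp j
end

section
/- Let d > −1 with d ≠ 0 and let λ be a positive integer. Define p_λ = ( 1 + ( (1 − 2^(−d)) / ( (2^λ − 1)^(−d) − (2^λ − 0.5)^(−d) ) )^(1/(1+d)) )^(−1). Then the λ-th and (λ+1)-th terms of the upper-bound minimization coincide at p_λ: λ + (1/d)·log₂( p_λ^(1+d) + 2^d·(1−p_λ)^(1+d)·(2^λ − 1)^(−d) ) = (λ+1) + (1/d)·log₂( p_λ^(1+d) + 2^d·(1−p_λ)^(1+d)·(2^(λ+1) − 1)^(−d) ). Likewise, defining p'_λ = ( 1 + ( (2^d − 1) / ( (2^λ − 1)^(−d) − (2^λ − 0.5)^(−d) ) )^(1/(1+d)) )^(−1), the λ-th and (λ+1)-th terms of the lower-bound minimization coincide at p'_λ: λ + (1/d)·log₂( p'_λ^(1+d) + (1−p'_λ)^(1+d)·(2^λ − 1)^(−d) ) = (λ+1) + (1/d)·log₂( p'_λ^(1+d) + (1−p'_λ)^(1+d)·(2^(λ+1) − 1)^(−d) ). -/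
open Real

/-!
Write `A = (X - 1)^(-d)`, `C = (X - 1/2)^(-d)` and `s = t / (A - C)`, where `k t = 2^d - 1`.
The point `p = (1 + s^(1/(1+d)))⁻¹` is exactly where `(1 - p)^(1+d) = s p^(1+d)`, and then
`k (1 - p)^(1+d) (A - C) = (2^d - 1) p^(1+d)`. Since `(2X - 1)^(-d) = 2^(-d) C`, this says that the
argument of the logarithm in the `λ`-th term is `2^d` times the one in the `(λ+1)`-th term, and
`(1/d) log₂ 2^d = 1` absorbs the difference between `λ` and `λ + 1`. The numbers `t` and `A - C`
both have the sign of `d`, so `s > 0`. The two bounds are the case `X = 2^λ`, with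
`(k, t) = (2^d, 1 - 2^(-d))` for `ω^d` and `(k, t) = (1, 2^d - 1)` for `o^d`.
-/

lemma mul_rpow_sub_rpow_pos {x y e : ℝ} (hx : 0 < x) (hxy : x < y) (he : e ≠ 0) :
    0 < e * (y ^ e - x ^ e) := by
  rcases he.lt_or_gt with he | he
  · exact mul_pos_of_neg_of_neg he (sub_neg.2 (rpow_lt_rpow_of_neg hx hxy he))
  · exact mul_pos he (sub_pos.2 (rpow_lt_rpow hx.le hxy he))

lemma one_sub_inv_one_add_rpow_one_div {s a : ℝ} (hs : 0 ≤ s) (ha : a ≠ 0) :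
    (1 - (1 + s ^ (1 / a))⁻¹) ^ a = s * (1 + s ^ (1 / a))⁻¹ ^ a := by
  have hr : 0 ≤ s ^ (1 / a) := rpow_nonneg hs _
  have hsub : 1 - (1 + s ^ (1 / a))⁻¹ = s ^ (1 / a) * (1 + s ^ (1 / a))⁻¹ := by
    field_simp
    ring
  rw [hsub, mul_rpow hr (by positivity), ← rpow_mul hs, one_div_mul_cancel ha, rpow_one]

lemma two_mul_sub_one_rpow_neg {x : ℝ} (d : ℝ) (hx : 1 / 2 < x) :
    (2 * x - 1) ^ (-d) = 2 ^ (-d) * (x - 0.5) ^ (-d) := by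
  rw [← mul_rpow zero_le_two (by norm_num; linarith)]
  ring_nf

lemma add_one_div_mul_logb_two_rpow_mul (L : ℝ) {d Y : ℝ} (hd : d ≠ 0) (hY : Y ≠ 0) :
    L + 1 / d * logb 2 (2 ^ d * Y) = (L + 1) + 1 / d * logb 2 Y := by
  rw [logb_mul (by positivity) hY, logb_rpow two_pos (by norm_num)]
  field_simp
  ring

lemma div_rpow_neg_sub_rpow_neg_pos {d t X : ℝ} (hd : d ≠ 0) (hdt : 0 < d * t) (hX : 1 < X) :
    0 < t / ((X - 1) ^ (-d) - (X - 0.5) ^ (-d)) := by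
  have hdAC : 0 < -d * ((X - 0.5) ^ (-d) - (X - 1) ^ (-d)) :=
    mul_rpow_sub_rpow_pos (by linarith) (by norm_num) (neg_ne_zero.2 hd)
  rw [← mul_div_mul_left t _ hd]
  exact div_pos hdt (by linarith)

theorem add_one_div_mul_logb_eq_succ_at_transition (L : ℝ) {d k t X : ℝ} (hd : -1 < d)
    (hd0 : d ≠ 0) (hk : 0 < k) (hkt : k * t = 2 ^ d - 1) (hX : 1 < X) :
    let p := (1 + (t / ((X - 1) ^ (-d) - (X - 0.5) ^ (-d))) ^ (1 / (1 + d)))⁻¹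
    L + 1 / d * logb 2 (p ^ (1 + d) + k * (1 - p) ^ (1 + d) * (X - 1) ^ (-d)) =
      (L + 1) + 1 / d * logb 2 (p ^ (1 + d) + k * (1 - p) ^ (1 + d) * (2 * X - 1) ^ (-d)) := by
  intro p
  have hdt : 0 < d * t := by
    have := mul_rpow_sub_rpow_pos one_pos one_lt_two hd0
    rw [one_rpow, ← hkt, mul_left_comm] at this
    exact pos_of_mul_pos_right this hk.le
  have hs := div_rpow_neg_sub_rpow_neg_pos hd0 hdt hX
  set A := (X - 1) ^ (-d)
  set C := (X - 0.5) ^ (-d)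
  set s := t / (A - C)
  have hsAC : s * (A - C) = t := div_mul_cancel₀ t (sub_ne_zero.2 fun hAC ↦ by simp [s, hAC] at hs)
  have hQ : (1 - p) ^ (1 + d) = s * p ^ (1 + d) :=
    one_sub_inv_one_add_rpow_one_div hs.le (by linarith)
  have hp : 0 < p := by positivity
  have hp1 : 0 ≤ 1 - p :=
    sub_nonneg.2 (inv_le_one_of_one_le₀ (le_add_of_nonneg_right (rpow_nonneg hs.le _)))
  have h2d : (2 : ℝ) ^ d * 2 ^ (-d) = 1 := by rw [← rpow_add two_pos, add_neg_cancel, rpow_zero]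
  have hscale : p ^ (1 + d) + k * (1 - p) ^ (1 + d) * A =
      2 ^ d * (p ^ (1 + d) + k * (1 - p) ^ (1 + d) * (2 * X - 1) ^ (-d)) := by
    rw [two_mul_sub_one_rpow_neg d (by linarith), hQ]
    linear_combination (k * p ^ (1 + d)) * hsAC + p ^ (1 + d) * hkt
      - (k * s * p ^ (1 + d) * C) * h2d
  have hpos : 0 < p ^ (1 + d) + k * (1 - p) ^ (1 + d) * (2 * X - 1) ^ (-d) :=
    add_pos_of_pos_of_nonneg (rpow_pos_of_pos hp _)
      (mul_nonneg (mul_nonneg hk.le (rpow_nonneg hp1 _)) (rpow_nonneg (by linarith) _))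
  rw [hscale]
  exact add_one_div_mul_logb_two_rpow_mul L hd0 hpos.ne'

theorem stmt_19 (d : ℝ) (hd : -1 < d) (hd0 : d ≠ 0) (lam : ℕ) (hlam : 1 ≤ lam) :
    (let plam : ℝ := (1 + ((1 - (2 : ℝ) ^ (-d)) /
        (((2 : ℝ) ^ (lam : ℝ) - 1) ^ (-d) - ((2 : ℝ) ^ (lam : ℝ) - 0.5) ^ (-d))) ^
          (1 / (1 + d)))⁻¹;
      (lam : ℝ) + (1 / d) * Real.logb 2
          (plam ^ (1 + d) +
            (2 : ℝ) ^ d * (1 - plam) ^ (1 + d) * ((2 : ℝ) ^ (lam : ℝ) - 1) ^ (-d))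
        = ((lam : ℝ) + 1) + (1 / d) * Real.logb 2
          (plam ^ (1 + d) +
            (2 : ℝ) ^ d * (1 - plam) ^ (1 + d) * ((2 : ℝ) ^ ((lam : ℝ) + 1) - 1) ^ (-d))) ∧
    (let plam' : ℝ := (1 + (((2 : ℝ) ^ d - 1) /
        (((2 : ℝ) ^ (lam : ℝ) - 1) ^ (-d) - ((2 : ℝ) ^ (lam : ℝ) - 0.5) ^ (-d))) ^
          (1 / (1 + d)))⁻¹;
      (lam : ℝ) + (1 / d) * Real.logb 2
          (plam' ^ (1 + d) + (1 - plam') ^ (1 + d) * ((2 : ℝ) ^ (lam : ℝ) - 1) ^ (-d))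
        = ((lam : ℝ) + 1) + (1 / d) * Real.logb 2
          (plam' ^ (1 + d) +
            (1 - plam') ^ (1 + d) * ((2 : ℝ) ^ ((lam : ℝ) + 1) - 1) ^ (-d))) := by
  have hX : 1 < (2 : ℝ) ^ (lam : ℝ) := one_lt_rpow one_lt_two (by exact_mod_cast hlam)
  have hsucc : (2 : ℝ) ^ ((lam : ℝ) + 1) = 2 * 2 ^ (lam : ℝ) := by
    rw [rpow_add_one two_ne_zero, mul_comm]
  have hupper : (2 : ℝ) ^ d * (1 - 2 ^ (-d)) = 2 ^ d - 1 := by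
    rw [mul_sub, mul_one, ← rpow_add two_pos, add_neg_cancel, rpow_zero]
  rw [hsucc]
  constructor
  · exact add_one_div_mul_logb_eq_succ_at_transition _ hd hd0 (by positivity) hupper hX
  · simpa only [one_mul] using
      add_one_div_mul_logb_eq_succ_at_transition _ hd hd0 one_pos (one_mul _) hX
end
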